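/- arXiv:2312.10558 — 4 statements merged into one kernel-verified Lean document; each statement's English description precedes it below -/
import Mathlib

section
/- Let X = (Y₁, Z₁), V̂ = M_Z Y₁ with Z = (Z₁, Z₂). Then X^⊤ V̂ = ((Y₁^⊤M_Z Y₁)^⊤, 0)^⊤ (block form with zero block for Z₁), X^⊤ M_{V̂} X = X^⊤ P_Z X, and X^⊤ M_{V̂} Y₂ = X^⊤ P_Z Y₂; consequently the control-function estimator θ̂_cf = (X^⊤ M_{V̂} X)^{-1} X^⊤ M_{V̂} Y₂ equals the 2SLS estimator θ̂_{2sls} = (X^⊤ P_Z X)^{-1} X^⊤ P_Z Y₂. -/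
open Matrix

noncomputable def proj {n : ℕ} {m : Type*} [Fintype m] [DecidableEq m]
    (A : Matrix (Fin n) m ℝ) : Matrix (Fin n) (Fin n) ℝ :=
  A * (Aᵀ * A)⁻¹ * Aᵀ

noncomputable def annih {n : ℕ} {m : Type*} [Fintype m] [DecidableEq m]
    (A : Matrix (Fin n) m ℝ) : Matrix (Fin n) (Fin n) ℝ :=
  1 - proj A

lemma transpose_mul_annih {n : ℕ} {m : Type*} [Fintype m] [DecidableEq m]
    (A : Matrix (Fin n) m ℝ) (h : Invertible (Aᵀ * A)) :
    Aᵀ * annih A = 0 := by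
  rw [annih, Matrix.mul_sub, Matrix.mul_one, proj, ← Matrix.mul_assoc,
    ← Matrix.mul_assoc, Matrix.mul_inv_of_invertible, Matrix.one_mul, sub_self]

lemma annih_transpose {n : ℕ} {m : Type*} [Fintype m] [DecidableEq m]
    (A : Matrix (Fin n) m ℝ) : (annih A)ᵀ = annih A := by
  simp only [annih, proj, Matrix.transpose_sub, Matrix.transpose_one,
    Matrix.transpose_mul, Matrix.transpose_nonsing_inv, Matrix.transpose_transpose,
    Matrix.mul_assoc]

lemma annih_idem {n : ℕ} {m : Type*} [Fintype m] [DecidableEq m]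
    (A : Matrix (Fin n) m ℝ) (h : Invertible (Aᵀ * A)) :
    annih A * annih A = annih A := by
  nth_rewrite 1 [annih]
  rw [Matrix.sub_mul, Matrix.one_mul, proj, Matrix.mul_assoc, Matrix.mul_assoc,
    transpose_mul_annih A h]
  simp

theorem stmt_6 {n d k₁ k₂ : ℕ}
    (Y₁ : Matrix (Fin n) (Fin d) ℝ) (Y₂ : Matrix (Fin n) (Fin 1) ℝ)
    (Z₁ : Matrix (Fin n) (Fin k₁) ℝ) (Z₂ : Matrix (Fin n) (Fin k₂) ℝ)
    (Z : Matrix (Fin n) (Fin k₁ ⊕ Fin k₂) ℝ) (hZ : Z = fromCols Z₁ Z₂)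
    (X : Matrix (Fin n) (Fin d ⊕ Fin k₁) ℝ) (hX : X = fromCols Y₁ Z₁)
    (Vhat : Matrix (Fin n) (Fin d) ℝ) (hV : Vhat = annih Z * Y₁)
    (hZZ : Invertible (Zᵀ * Z)) (hZ₁Z₁ : Invertible (Z₁ᵀ * Z₁))
    (hXX : Invertible (Xᵀ * X)) (hXPX : Invertible (Xᵀ * proj Z * X))
    (hVV : Invertible (Vhatᵀ * Vhat)) :
    Xᵀ * Vhat = fromRows (Y₁ᵀ * annih Z * Y₁) 0 ∧
    Xᵀ * annih Vhat * X = Xᵀ * proj Z * X ∧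
    Xᵀ * annih Vhat * Y₂ = Xᵀ * proj Z * Y₂ ∧
    (Xᵀ * annih Vhat * X)⁻¹ * (Xᵀ * annih Vhat * Y₂) =
      (Xᵀ * proj Z * X)⁻¹ * (Xᵀ * proj Z * Y₂) := by
  -- Z₁ᵀ * annih Z = 0
  have hZt : Zᵀ * annih Z = 0 := transpose_mul_annih Z hZZ
  have hZ₁t : Z₁ᵀ * annih Z = 0 := by
    rw [hZ] at hZt ⊢
    rw [transpose_fromCols, fromRows_mul, ← fromRows_zero, fromRows_ext_iff] at hZt
    exact hZt.1
  set A := Y₁ᵀ * annih Z * Y₁ with hA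
  -- Vhatᵀ = Y₁ᵀ * annih Z
  have hVt : Vhatᵀ = Y₁ᵀ * annih Z := by
    rw [hV, Matrix.transpose_mul, annih_transpose]
  -- Vhatᵀ * Vhat = A
  have hVtV : Vhatᵀ * Vhat = A := by
    rw [hVt, hV, Matrix.mul_assoc, ← Matrix.mul_assoc (annih Z), annih_idem Z hZZ,
      hA, Matrix.mul_assoc]
  -- first claim
  have h1 : Xᵀ * Vhat = fromRows A 0 := by
    rw [hX, hV, transpose_fromCols, fromRows_mul, fromRows_ext_iff]
    refine ⟨by rw [hA, ← Matrix.mul_assoc], by rw [← Matrix.mul_assoc, hZ₁t, Matrix.zero_mul]⟩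
  have hAinv : Invertible A := hVtV ▸ hVV
  -- key: Xᵀ * annih Vhat = Xᵀ * proj Z
  have hkey : Xᵀ * annih Vhat = Xᵀ * proj Z := by
    have hP : Xᵀ * proj Vhat = Xᵀ * annih Z := by
      rw [proj, ← Matrix.mul_assoc, ← Matrix.mul_assoc, h1, hVtV, fromRows_mul,
        Matrix.mul_inv_of_invertible, Matrix.zero_mul, fromRows_mul,
        Matrix.one_mul, Matrix.zero_mul, hVt, hX, transpose_fromCols,
        fromRows_mul, hZ₁t]
    calc Xᵀ * annih Vhat = Xᵀ - Xᵀ * proj Vhat := by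
          rw [annih, Matrix.mul_sub, Matrix.mul_one]
      _ = Xᵀ - Xᵀ * annih Z := by rw [hP]
      _ = Xᵀ * proj Z := by
          rw [annih, Matrix.mul_sub, Matrix.mul_one]; abel
  refine ⟨h1, by rw [hkey], by rw [hkey], by rw [hkey]⟩
end

section
/- With X = (Y₁, Z₁) and V̂ = M_Z Y₁, the matrix V̂^⊤ M_X V̂ equals Y₁^⊤(P_Z − P_{Z₁})Y₁ · (Y₁^⊤M_{Z₁}Y₁)^{-1} · Y₁^⊤M_Z Y₁. -/
open Matrix

lemma proj_transpose {n : ℕ} {m : Type*} [Fintype m] [DecidableEq m]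
    (A : Matrix (Fin n) m ℝ) : (proj A)ᵀ = proj A := by
  simp [proj, Matrix.transpose_mul, Matrix.transpose_nonsing_inv, Matrix.mul_assoc]

lemma annih_mul_self_eq_zero {n : ℕ} {m : Type*} [Fintype m] [DecidableEq m]
    (A : Matrix (Fin n) m ℝ) (h : Invertible (Aᵀ * A)) : annih A * A = 0 := by
  simp only [annih, proj, Matrix.sub_mul, Matrix.one_mul, Matrix.mul_assoc]
  rw [Matrix.nonsing_inv_mul _ (Matrix.isUnit_det_of_invertible _)]
  simp

theorem stmt_7 {n d k₁ k₂ : ℕ}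
    (Y₁ : Matrix (Fin n) (Fin d) ℝ)
    (Z₁ : Matrix (Fin n) (Fin k₁) ℝ) (Z₂ : Matrix (Fin n) (Fin k₂) ℝ)
    (Z : Matrix (Fin n) (Fin k₁ ⊕ Fin k₂) ℝ) (hZ : Z = fromCols Z₁ Z₂)
    (X : Matrix (Fin n) (Fin d ⊕ Fin k₁) ℝ) (hX : X = fromCols Y₁ Z₁)
    (Vhat : Matrix (Fin n) (Fin d) ℝ) (hV : Vhat = annih Z * Y₁)
    (hZZ : Invertible (Zᵀ * Z)) (hZ₁Z₁ : Invertible (Z₁ᵀ * Z₁))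
    (hXX : Invertible (Xᵀ * X)) (hYMY : Invertible (Y₁ᵀ * annih Z₁ * Y₁)) :
    Vhatᵀ * annih X * Vhat =
      Y₁ᵀ * (proj Z - proj Z₁) * Y₁ * (Y₁ᵀ * annih Z₁ * Y₁)⁻¹ *
        (Y₁ᵀ * annih Z * Y₁) := by
  set S : Matrix (Fin d) (Fin d) ℝ := Y₁ᵀ * annih Z * Y₁ with hS
  set W : Matrix (Fin d) (Fin d) ℝ := Y₁ᵀ * annih Z₁ * Y₁ with hW
  -- M_Z kills Z₁
  have hMZ1 : annih Z * Z₁ = 0 := by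
    have h0 : annih Z * Z = 0 := annih_mul_self_eq_zero Z hZZ
    have h1 : Z₁ = Z * fromRows (1 : Matrix (Fin k₁) (Fin k₁) ℝ)
        (0 : Matrix (Fin k₂) (Fin k₁) ℝ) := by
      rw [hZ, fromCols_mul_fromRows]; simp
    rw [h1, ← Matrix.mul_assoc, h0, Matrix.zero_mul]
  -- M_Z * M_{Z₁} = M_Z
  have hMM : annih Z * annih Z₁ = annih Z := by
    have : annih Z * proj Z₁ = 0 := by
      rw [proj, ← Matrix.mul_assoc, ← Matrix.mul_assoc, hMZ1]
      simp
    rw [show annih Z₁ = 1 - proj Z₁ from rfl, Matrix.mul_sub, Matrix.mul_one, this,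
      sub_zero]
  have hZ1MZ : Z₁ᵀ * annih Z = 0 := by
    have := congrArg Matrix.transpose hMZ1
    simpa [Matrix.transpose_mul, annih_transpose] using this
  have hMZidem : annih Z * annih Z = annih Z := annih_idem Z hZZ
  -- Xᵀ * Vhat
  have hXtV : Xᵀ * Vhat = fromRows S (0 : Matrix (Fin k₁) (Fin d) ℝ) := by
    rw [hX, transpose_fromCols, fromRows_mul, hV, ← Matrix.mul_assoc Z₁ᵀ, hZ1MZ,
      Matrix.zero_mul, ← Matrix.mul_assoc, hS]
  -- candidate solution for (XᵀX)⁻¹ (Xᵀ Vhat)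
  have hXtX : Xᵀ * X = fromBlocks (Y₁ᵀ * Y₁) (Y₁ᵀ * Z₁) (Z₁ᵀ * Y₁) (Z₁ᵀ * Z₁) := by
    rw [hX, transpose_fromCols, fromRows_mul_fromCols]
  have hWexp : Y₁ᵀ * (Y₁ * (W⁻¹ * S)) - Y₁ᵀ * (Z₁ * ((Z₁ᵀ * Z₁)⁻¹ * (Z₁ᵀ * (Y₁ * (W⁻¹ * S)))))
      = W * (W⁻¹ * S) := by
    rw [hW]
    simp only [annih, proj, Matrix.sub_mul, Matrix.mul_sub, Matrix.one_mul,
      Matrix.mul_one, Matrix.mul_assoc]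
  have htop : Y₁ᵀ * Y₁ * (W⁻¹ * S)
      + Y₁ᵀ * Z₁ * -((Z₁ᵀ * Z₁)⁻¹ * (Z₁ᵀ * (Y₁ * (W⁻¹ * S)))) = S := by
    rw [Matrix.mul_neg, ← sub_eq_add_neg, Matrix.mul_assoc Y₁ᵀ,
      Matrix.mul_assoc Y₁ᵀ, hWexp, Matrix.mul_inv_cancel_left_of_invertible]
  have hbot : Z₁ᵀ * Y₁ * (W⁻¹ * S)
      + Z₁ᵀ * Z₁ * -((Z₁ᵀ * Z₁)⁻¹ * (Z₁ᵀ * (Y₁ * (W⁻¹ * S)))) = 0 := by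
    rw [Matrix.mul_neg, Matrix.mul_inv_cancel_left_of_invertible]
    simp [Matrix.mul_assoc]
  have hsolve : Xᵀ * X * fromRows (W⁻¹ * S)
      (-((Z₁ᵀ * Z₁)⁻¹ * (Z₁ᵀ * (Y₁ * (W⁻¹ * S))))) = fromRows S 0 := by
    rw [hXtX, fromBlocks_mul_fromRows, htop, hbot]
  have hinv : (Xᵀ * X)⁻¹ * fromRows S (0 : Matrix (Fin k₁) (Fin d) ℝ)
      = fromRows (W⁻¹ * S) (-((Z₁ᵀ * Z₁)⁻¹ * (Z₁ᵀ * (Y₁ * (W⁻¹ * S))))) := by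
    rw [← hsolve, ← Matrix.mul_assoc,
      Matrix.nonsing_inv_mul _ (Matrix.isUnit_det_of_invertible _), Matrix.one_mul]
  -- proj X * Vhat
  have hPXV : proj X * Vhat = annih Z₁ * (Y₁ * (W⁻¹ * S)) := by
    have h1 : proj X * Vhat = X * ((Xᵀ * X)⁻¹ * (Xᵀ * Vhat)) := by
      simp [proj, Matrix.mul_assoc]
    rw [h1, hXtV, hinv, hX, fromCols_mul_fromRows]
    simp only [annih, proj, Matrix.sub_mul, Matrix.one_mul, Matrix.mul_neg,
      ← sub_eq_add_neg, Matrix.mul_assoc]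
  -- assemble
  have hVtV : Vhatᵀ * Vhat = S := by
    rw [hV, Matrix.transpose_mul, annih_transpose, Matrix.mul_assoc,
      ← Matrix.mul_assoc (annih Z), hMZidem, hS, Matrix.mul_assoc]
  have hVtPXV : Vhatᵀ * (proj X * Vhat) = S * (W⁻¹ * S) := by
    rw [hPXV, hV, Matrix.transpose_mul, annih_transpose]
    rw [show Y₁ᵀ * annih Z * (annih Z₁ * (Y₁ * (W⁻¹ * S)))
        = Y₁ᵀ * (annih Z * annih Z₁) * Y₁ * (W⁻¹ * S) by
      simp [Matrix.mul_assoc], hMM, ← hS]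
  have hLHS : Vhatᵀ * annih X * Vhat = S - S * (W⁻¹ * S) := by
    rw [Matrix.mul_assoc, annih, Matrix.sub_mul, Matrix.one_mul, Matrix.mul_sub,
      hVtV, hVtPXV]
  rw [hLHS]
  -- RHS
  have hdiff : proj Z - proj Z₁ = annih Z₁ - annih Z := by
    simp [annih]
  rw [hdiff]
  have hWS : Y₁ᵀ * (annih Z₁ - annih Z) * Y₁ = W - S := by
    rw [hW, hS, Matrix.mul_sub, Matrix.sub_mul]
  rw [hWS, Matrix.sub_mul, Matrix.sub_mul, Matrix.mul_inv_of_invertible,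
    Matrix.one_mul, Matrix.mul_assoc, ← Matrix.mul_assoc (Y₁ᵀ * annih Z), ← hS,
    ← Matrix.mul_assoc]
end

section
/- The OLS–2SLS difference for the full coefficient vector factors through the endogenous block: θ̂_ols − θ̂_{2sls} = (I_d; −(Z₁^⊤Z₁)^{-1}Z₁^⊤Y₁) (β̂_ols − β̂_{2sls}), stacking the identity block over the block −(Z₁^⊤Z₁)^{-1}Z₁^⊤Y₁. -/
open Matrix

/-- Key normal-equation lemma: if `W` fixes `Z₁` and `β` satisfies the FWL equation,
then `fromRows β γ` with `γ = (Z₁ᵀZ₁)⁻¹Z₁ᵀ(Y₂ - Y₁β)` solves the weighted normal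
equations. -/
lemma key_normal {n d k₁ : ℕ}
    (Y₁ : Matrix (Fin n) (Fin d) ℝ) (Y₂ : Matrix (Fin n) (Fin 1) ℝ)
    (Z₁ : Matrix (Fin n) (Fin k₁) ℝ)
    (hZ₁Z₁ : Invertible (Z₁ᵀ * Z₁))
    (W : Matrix (Fin n) (Fin n) ℝ)
    (hWZ : W * Z₁ = Z₁) (hZW : Z₁ᵀ * W = Z₁ᵀ)
    (β : Matrix (Fin d) (Fin 1) ℝ)
    (hβ : Y₁ᵀ * (W - proj Z₁) * Y₁ * β = Y₁ᵀ * (W - proj Z₁) * Y₂) :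
    ((fromCols Y₁ Z₁)ᵀ * W * fromCols Y₁ Z₁) *
      fromRows β ((Z₁ᵀ * Z₁)⁻¹ * (Z₁ᵀ * (Y₂ - Y₁ * β))) =
    (fromCols Y₁ Z₁)ᵀ * W * Y₂ := by
  set γ : Matrix (Fin k₁) (Fin 1) ℝ := (Z₁ᵀ * Z₁)⁻¹ * (Z₁ᵀ * (Y₂ - Y₁ * β)) with hγ
  have hZγ : Z₁ * γ = proj Z₁ * (Y₂ - Y₁ * β) := by
    rw [hγ, proj, Matrix.mul_assoc, Matrix.mul_assoc]
  have hcancel : Z₁ᵀ * (Z₁ * γ) = Z₁ᵀ * (Y₂ - Y₁ * β) := by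
    rw [hγ, ← Matrix.mul_assoc, Matrix.mul_inv_cancel_left_of_invertible]
  rw [transpose_fromCols, Matrix.mul_assoc, Matrix.mul_assoc,
    Matrix.mul_assoc, fromCols_mul_fromRows, fromRows_mul, fromRows_mul]
  rw [fromRows_ext_iff]
  constructor
  · -- top block
    have hWP : W * (proj Z₁ * (Y₂ - Y₁ * β)) = proj Z₁ * (Y₂ - Y₁ * β) := by
      rw [proj, Matrix.mul_assoc Z₁, Matrix.mul_assoc Z₁, ← Matrix.mul_assoc W,
        hWZ, ← Matrix.mul_assoc, ← Matrix.mul_assoc]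
    have hβ' : Y₁ᵀ * ((W - proj Z₁) * (Y₁ * β)) = Y₁ᵀ * ((W - proj Z₁) * Y₂) := by
      simp only [Matrix.mul_assoc] at hβ ⊢
      exact hβ
    rw [Matrix.mul_add, Matrix.mul_add, hZγ, hWP]
    rw [Matrix.sub_mul, Matrix.sub_mul, Matrix.mul_sub, Matrix.mul_sub] at hβ'
    rw [Matrix.mul_sub, Matrix.mul_sub]
    -- goal: Y₁ᵀ*(W*(Y₁*β)) + (Y₁ᵀ*(P*Y₂) - Y₁ᵀ*(P*(Y₁*β))) = Y₁ᵀ*(W*Y₂)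
    calc Y₁ᵀ * (W * (Y₁ * β)) + (Y₁ᵀ * (proj Z₁ * Y₂) - Y₁ᵀ * (proj Z₁ * (Y₁ * β)))
        = (Y₁ᵀ * (W * (Y₁ * β)) - Y₁ᵀ * (proj Z₁ * (Y₁ * β))) + Y₁ᵀ * (proj Z₁ * Y₂) := by
          abel
      _ = (Y₁ᵀ * (W * Y₂) - Y₁ᵀ * (proj Z₁ * Y₂)) + Y₁ᵀ * (proj Z₁ * Y₂) := by rw [hβ']
      _ = Y₁ᵀ * (W * Y₂) := by abel
  · -- bottom block
    simp only [Matrix.mul_add, ← Matrix.mul_assoc, hZW, hγ]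
    rw [Matrix.mul_inv_of_invertible, Matrix.one_mul]
    simp only [Matrix.mul_sub, Matrix.mul_assoc]
    abel

lemma fromRows_sub' {m₁ m₂ n : Type*} (A₁ C₁ : Matrix m₁ n ℝ) (A₂ C₂ : Matrix m₂ n ℝ) :
    fromRows A₁ A₂ - fromRows C₁ C₂ = fromRows (A₁ - C₁) (A₂ - C₂) := by
  ext (i | i) j <;> simp

theorem stmt_13 {n d k₁ k₂ : ℕ}
    (Y₁ : Matrix (Fin n) (Fin d) ℝ) (Y₂ : Matrix (Fin n) (Fin 1) ℝ)
    (Z₁ : Matrix (Fin n) (Fin k₁) ℝ) (Z₂ : Matrix (Fin n) (Fin k₂) ℝ)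
    (Z : Matrix (Fin n) (Fin k₁ ⊕ Fin k₂) ℝ) (hZ : Z = fromCols Z₁ Z₂)
    (X : Matrix (Fin n) (Fin d ⊕ Fin k₁) ℝ) (hX : X = fromCols Y₁ Z₁)
    (hZZ : Invertible (Zᵀ * Z)) (hZ₁Z₁ : Invertible (Z₁ᵀ * Z₁))
    (hXX : Invertible (Xᵀ * X)) (hXPX : Invertible (Xᵀ * proj Z * X))
    (hYMY : Invertible (Y₁ᵀ * annih Z₁ * Y₁))
    (hYPY : Invertible (Y₁ᵀ * (proj Z - proj Z₁) * Y₁))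
    (θols θ2sls : Matrix (Fin d ⊕ Fin k₁) (Fin 1) ℝ)
    (hθols : θols = (Xᵀ * X)⁻¹ * (Xᵀ * Y₂))
    (hθ2sls : θ2sls = (Xᵀ * proj Z * X)⁻¹ * (Xᵀ * proj Z * Y₂))
    (βols β2sls : Matrix (Fin d) (Fin 1) ℝ)
    (hβols : βols = (Y₁ᵀ * annih Z₁ * Y₁)⁻¹ * (Y₁ᵀ * annih Z₁ * Y₂))
    (hβ2sls : β2sls = (Y₁ᵀ * (proj Z - proj Z₁) * Y₁)⁻¹ *
      (Y₁ᵀ * (proj Z - proj Z₁) * Y₂))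
    (hblock : β2sls = θ2sls.submatrix Sum.inl id) :
    θols - θ2sls =
      fromRows (1 : Matrix (Fin d) (Fin d) ℝ)
        (-((Z₁ᵀ * Z₁)⁻¹ * (Z₁ᵀ * Y₁))) * (βols - β2sls) := by
  -- `proj Z` fixes `Z₁`
  have hZ1 : Z₁ = Z * fromRows (1 : Matrix (Fin k₁) (Fin k₁) ℝ)
      (0 : Matrix (Fin k₂) (Fin k₁) ℝ) := by
    rw [hZ, fromCols_mul_fromRows]; simp
  have hWZ : proj Z * Z₁ = Z₁ := by
    rw [proj]
    conv_lhs => rw [hZ1]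
    rw [Matrix.mul_assoc, Matrix.mul_assoc, ← Matrix.mul_assoc Zᵀ Z,
      Matrix.inv_mul_cancel_left_of_invertible, ← hZ1]
  have hsym : (proj Z)ᵀ = proj Z := by
    rw [proj, Matrix.transpose_mul, Matrix.transpose_mul,
      Matrix.transpose_nonsing_inv, Matrix.transpose_mul, Matrix.transpose_transpose,
      Matrix.mul_assoc]
  have hZW : Z₁ᵀ * proj Z = Z₁ᵀ := by
    calc Z₁ᵀ * proj Z = ((proj Z)ᵀ * Z₁)ᵀ := by
          rw [Matrix.transpose_mul, Matrix.transpose_transpose]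
      _ = Z₁ᵀ := by rw [hsym, hWZ]
  -- FWL equations
  have hβo : Y₁ᵀ * ((1 : Matrix (Fin n) (Fin n) ℝ) - proj Z₁) * Y₁ * βols =
      Y₁ᵀ * ((1 : Matrix (Fin n) (Fin n) ℝ) - proj Z₁) * Y₂ := by
    show Y₁ᵀ * annih Z₁ * Y₁ * βols = Y₁ᵀ * annih Z₁ * Y₂
    rw [hβols, Matrix.mul_inv_cancel_left_of_invertible]
  have hβt : Y₁ᵀ * (proj Z - proj Z₁) * Y₁ * β2sls =
      Y₁ᵀ * (proj Z - proj Z₁) * Y₂ := by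
    rw [hβ2sls, Matrix.mul_inv_cancel_left_of_invertible]
  -- closed forms for θols and θ2sls
  have hko := key_normal Y₁ Y₂ Z₁ hZ₁Z₁ 1 (Matrix.one_mul Z₁) (Matrix.mul_one Z₁ᵀ)
    βols hβo
  have hkt := key_normal Y₁ Y₂ Z₁ hZ₁Z₁ (proj Z) hWZ hZW β2sls hβt
  rw [← hX] at hko hkt
  rw [Matrix.mul_one] at hko
  have hθo' : θols = fromRows βols ((Z₁ᵀ * Z₁)⁻¹ * (Z₁ᵀ * (Y₂ - Y₁ * βols))) := by
    rw [hθols, ← hko, Matrix.inv_mul_cancel_left_of_invertible]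
  have hθt' : θ2sls = fromRows β2sls ((Z₁ᵀ * Z₁)⁻¹ * (Z₁ᵀ * (Y₂ - Y₁ * β2sls))) := by
    rw [hθ2sls, ← hkt, Matrix.inv_mul_cancel_left_of_invertible]
  rw [hθo', hθt', fromRows_sub', fromRows_mul, Matrix.one_mul]
  -- conclude
  simp only [Matrix.mul_sub, Matrix.sub_mul, Matrix.neg_mul, Matrix.mul_assoc]
  abel_nf
end

section
/- The CF residual relates to the OLS residual via: V̂^⊤(Y₂ − Xθ̂_ols) = Y₁^⊤(P_Z − P_{Z₁})Y₁ (β̂_ols − β̂_{2sls}), where V̂ = M_Z Y₁. -/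
open Matrix

lemma proj_mul {n : ℕ} {m : Type*} [Fintype m] [DecidableEq m]
    (A : Matrix (Fin n) m ℝ) (hA : Invertible (Aᵀ * A)) : proj A * A = A := by
  rw [proj, Matrix.mul_assoc, Matrix.mul_assoc,
    Matrix.inv_mul_of_invertible, Matrix.mul_one]

theorem stmt_14 {n d k₁ k₂ : ℕ}
    (Y₁ : Matrix (Fin n) (Fin d) ℝ) (Y₂ : Matrix (Fin n) (Fin 1) ℝ)
    (Z₁ : Matrix (Fin n) (Fin k₁) ℝ) (Z₂ : Matrix (Fin n) (Fin k₂) ℝ)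
    (Z : Matrix (Fin n) (Fin k₁ ⊕ Fin k₂) ℝ) (hZ : Z = fromCols Z₁ Z₂)
    (X : Matrix (Fin n) (Fin d ⊕ Fin k₁) ℝ) (hX : X = fromCols Y₁ Z₁)
    (Vhat : Matrix (Fin n) (Fin d) ℝ) (hV : Vhat = annih Z * Y₁)
    (hZZ : Invertible (Zᵀ * Z)) (hZ₁Z₁ : Invertible (Z₁ᵀ * Z₁))
    (hXX : Invertible (Xᵀ * X))
    (hYMY : Invertible (Y₁ᵀ * annih Z₁ * Y₁))
    (hYPY : Invertible (Y₁ᵀ * (proj Z - proj Z₁) * Y₁))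
    (θols : Matrix (Fin d ⊕ Fin k₁) (Fin 1) ℝ)
    (hθols : θols = (Xᵀ * X)⁻¹ * (Xᵀ * Y₂))
    (βols β2sls : Matrix (Fin d) (Fin 1) ℝ)
    (hβols : βols = (Y₁ᵀ * annih Z₁ * Y₁)⁻¹ * (Y₁ᵀ * annih Z₁ * Y₂))
    (hβ2sls : β2sls = (Y₁ᵀ * (proj Z - proj Z₁) * Y₁)⁻¹ *
      (Y₁ᵀ * (proj Z - proj Z₁) * Y₂)) :
    Vhatᵀ * (Y₂ - X * θols) = Y₁ᵀ * (proj Z - proj Z₁) * Y₁ * (βols - β2sls) := by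
  -- basic projection facts
  have hPZ1 : proj Z * Z₁ = Z₁ := by
    have hsel : Z * fromRows (1 : Matrix (Fin k₁) (Fin k₁) ℝ)
        (0 : Matrix (Fin k₂) (Fin k₁) ℝ) = Z₁ := by
      rw [hZ, fromCols_mul_fromRows, Matrix.mul_one, Matrix.mul_zero, add_zero]
    calc proj Z * Z₁ = proj Z * Z * (fromRows 1 0 : Matrix (Fin k₁ ⊕ Fin k₂) (Fin k₁) ℝ) := by rw [Matrix.mul_assoc, hsel]
    _ = Z₁ := by rw [proj_mul Z hZZ, hsel]
  have hp1 : proj Z₁ = Z₁ * ((Z₁ᵀ * Z₁)⁻¹ * Z₁ᵀ) := by rw [proj, Matrix.mul_assoc]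
  have hPP1 : proj Z * proj Z₁ = proj Z₁ := by
    rw [hp1, ← Matrix.mul_assoc, hPZ1]
  -- normal equations
  set e := Y₂ - X * θols with he
  have hXe : Xᵀ * e = 0 := by
    rw [he, Matrix.mul_sub, hθols, ← Matrix.mul_assoc, ← Matrix.mul_assoc,
      Matrix.mul_inv_of_invertible, Matrix.one_mul, sub_self]
  have h1 : Y₁ᵀ * e = 0 := by
    have h := congrArg Matrix.toRows₁ hXe
    rwa [hX, transpose_fromCols, fromRows_mul, toRows₁_fromRows,
      show (0 : Matrix (Fin d ⊕ Fin k₁) (Fin 1) ℝ).toRows₁ = 0 from rfl] at h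
  have h2 : Z₁ᵀ * e = 0 := by
    have h := congrArg Matrix.toRows₂ hXe
    rwa [hX, transpose_fromCols, fromRows_mul, toRows₂_fromRows,
      show (0 : Matrix (Fin d ⊕ Fin k₁) (Fin 1) ℝ).toRows₂ = 0 from rfl] at h
  -- split θols
  set a := θols.toRows₁ with ha
  set b := θols.toRows₂ with hbdef
  have hXθ : X * θols = Y₁ * a + Z₁ * b := by
    conv_lhs => rw [hX, ← fromRows_toRows θols, fromCols_mul_fromRows]
  have heW : e = (Y₂ - Y₁ * a) - Z₁ * b := by
    rw [he, hXθ, sub_add_eq_sub_sub]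
  -- Z₁ * b = proj Z₁ * (Y₂ - Y₁ * a)
  have hb : Z₁ * b = proj Z₁ * (Y₂ - Y₁ * a) := by
    have h2' : Z₁ᵀ * (Y₂ - Y₁ * a) = Z₁ᵀ * (Z₁ * b) := by
      have := h2
      rw [heW, Matrix.mul_sub, sub_eq_zero] at this
      exact this
    calc Z₁ * b = Z₁ * ((Z₁ᵀ * Z₁)⁻¹ * (Z₁ᵀ * Z₁)) * b := by
          rw [Matrix.inv_mul_of_invertible, Matrix.mul_one]
    _ = Z₁ * ((Z₁ᵀ * Z₁)⁻¹ * (Z₁ᵀ * (Z₁ * b))) := by simp only [Matrix.mul_assoc]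
    _ = Z₁ * ((Z₁ᵀ * Z₁)⁻¹ * (Z₁ᵀ * (Y₂ - Y₁ * a))) := by rw [h2']
    _ = proj Z₁ * (Y₂ - Y₁ * a) := by rw [proj]; simp only [Matrix.mul_assoc]
  have heM : e = annih Z₁ * (Y₂ - Y₁ * a) := by
    rw [heW, hb, annih, Matrix.sub_mul, Matrix.one_mul]
  -- a = βols
  have hnorm : Y₁ᵀ * annih Z₁ * Y₁ * a = Y₁ᵀ * annih Z₁ * Y₂ := by
    have h1' : Y₁ᵀ * (annih Z₁ * (Y₂ - Y₁ * a)) = 0 := by rw [← heM]; exact h1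
    rw [Matrix.mul_sub, Matrix.mul_sub, sub_eq_zero, ← Matrix.mul_assoc,
      ← Matrix.mul_assoc] at h1'
    rw [h1', Matrix.mul_assoc]
  have haβ : a = βols := by
    rw [hβols, ← hnorm, ← Matrix.mul_assoc, Matrix.inv_mul_of_invertible, Matrix.one_mul]
  -- RHS simplification
  have hRHS : Y₁ᵀ * (proj Z - proj Z₁) * Y₁ * (βols - β2sls)
      = Y₁ᵀ * (proj Z - proj Z₁) * Y₁ * βols - Y₁ᵀ * (proj Z - proj Z₁) * Y₂ := by
    rw [Matrix.mul_sub, hβ2sls, ← Matrix.mul_assoc, Matrix.mul_inv_of_invertible,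
      Matrix.one_mul]
  -- LHS
  have hVt : Vhatᵀ = Y₁ᵀ * annih Z := by
    rw [hV, Matrix.transpose_mul, annih, Matrix.transpose_sub, Matrix.transpose_one,
      proj_transpose]
  have hPM : proj Z * annih Z₁ = proj Z - proj Z₁ := by
    rw [annih, Matrix.mul_sub, Matrix.mul_one, hPP1]
  have hPe : proj Z * e = (proj Z - proj Z₁) * (Y₂ - Y₁ * a) := by
    rw [heM, ← Matrix.mul_assoc, hPM]
  calc Vhatᵀ * e = Y₁ᵀ * (annih Z * e) := by rw [hVt, Matrix.mul_assoc]
  _ = Y₁ᵀ * e - Y₁ᵀ * (proj Z * e) := by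
      rw [annih, Matrix.sub_mul, Matrix.one_mul, Matrix.mul_sub]
  _ = - (Y₁ᵀ * ((proj Z - proj Z₁) * (Y₂ - Y₁ * a))) := by rw [h1, hPe, zero_sub]
  _ = Y₁ᵀ * (proj Z - proj Z₁) * Y₁ * a - Y₁ᵀ * (proj Z - proj Z₁) * Y₂ := by
      rw [Matrix.mul_sub, Matrix.mul_sub, neg_sub]
      simp only [Matrix.mul_assoc]
  _ = Y₁ᵀ * (proj Z - proj Z₁) * Y₁ * (βols - β2sls) := by rw [haβ, hRHS]
end
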